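/- arXiv:1609.01451 — 2 statements merged into one kernel-verified Lean document; each statement's English description precedes it below -/
import Mathlib

section
/- Let a : (0,∞) → (0,∞) be measurable with a non-decreasing, x ↦ x/a(x) non-decreasing, and ∫₁^∞ 1/(s·a(s)) ds < ∞. Let (λᵢ)_{i≥1} be a sequence of reals with 0 < λ₁ ≤ λ₂ ≤ ⋯. Then ∫₀¹ sup_{i≥1} (λᵢ e^{-λᵢ s} / a(λᵢ)) ds < ∞. -/
/-! Each term is bounded by `s⁻¹ / a s⁻¹`, independently of `i`, and the substitution `u = s⁻¹`
turns `∫₀¹ s⁻¹ / a s⁻¹ ds` into `∫₁^∞ du / (u a u)`. -/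

open Set Real MeasureTheory

lemma lintegral_Ioc_zero_one_comp_inv (g : ℝ → ENNReal) :
    ∫⁻ s in Ioc (0:ℝ) 1, g s⁻¹ = ∫⁻ u in Ici (1:ℝ), ENNReal.ofReal (u ^ 2)⁻¹ * g u := by
  have himage : Inv.inv '' Ici (1:ℝ) = Ioc 0 1 := by
    ext x
    simp [one_le_inv_iff₀]
  have hderiv (u : ℝ) (hu : u ∈ Ici 1) : HasDerivWithinAt Inv.inv (-(u ^ 2)⁻¹) (Ici 1) u :=
    (hasDerivAt_inv (zero_lt_one.trans_le hu).ne').hasDerivWithinAt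
  rw [← himage, lintegral_image_eq_lintegral_abs_deriv_mul measurableSet_Ici hderiv
    inv_injective.injOn]
  simp only [abs_neg, inv_inv, abs_inv, abs_pow, sq_abs]

lemma mul_exp_neg_mul_le_inv (lam : ℝ) {s : ℝ} (hs : 0 < s) : lam * exp (-(lam * s)) ≤ s⁻¹ := by
  rw [← one_div, le_div_iff₀ hs, mul_right_comm]
  exact (mul_exp_neg_le_exp_neg_one _).trans (exp_le_one_iff.2 (by norm_num))

/-- Splitting at `lam = s⁻¹`: below it use the monotonicity of `x / a x`, above it that of `a`. -/
lemma mul_exp_neg_mul_div_le_inv_div {a : ℝ → ℝ} (hpos : ∀ x > 0, 0 < a x)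
    (hmono : MonotoneOn a (Ioi 0)) (hmono' : MonotoneOn (fun x => x / a x) (Ioi 0))
    {lam s : ℝ} (hlam : 0 < lam) (hs : 0 < s) :
    lam * exp (-(lam * s)) / a lam ≤ s⁻¹ / a s⁻¹ := by
  have hs' : 0 < s⁻¹ := inv_pos.2 hs
  rcases le_total lam s⁻¹ with hle | hle
  · calc lam * exp (-(lam * s)) / a lam
        ≤ lam / a lam := by
          gcongr
          · exact (hpos lam hlam).le
          · exact mul_le_of_le_one_right hlam.le (exp_le_one_iff.2 (by nlinarith))
      _ ≤ s⁻¹ / a s⁻¹ := hmono' hlam hs' hle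
  · exact div_le_div₀ hs'.le (mul_exp_neg_mul_le_inv lam hs) (hpos _ hs') (hmono hs' hlam hle)

theorem stmt_2_general (a : ℝ → ℝ) (lam : ℕ → ℝ)
    (hpos : ∀ x > 0, 0 < a x)
    (hmono : MonotoneOn a (Ioi 0))
    (hmono' : MonotoneOn (fun x => x / a x) (Ioi 0))
    (hint : ∫⁻ s in Ici (1:ℝ), ENNReal.ofReal (1 / (s * a s)) < ⊤)
    (hlam0 : 0 < lam 0) (hlammono : Monotone lam) :
    ∫⁻ s in Ioc (0:ℝ) 1,
      ⨆ i, ENNReal.ofReal (lam i * Real.exp (-(lam i * s)) / a (lam i)) < ⊤ := by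
  have hlam (i : ℕ) : 0 < lam i := hlam0.trans_le (hlammono i.zero_le)
  calc ∫⁻ s in Ioc (0:ℝ) 1, ⨆ i, ENNReal.ofReal (lam i * exp (-(lam i * s)) / a (lam i))
      ≤ ∫⁻ s in Ioc (0:ℝ) 1, ENNReal.ofReal (s⁻¹ / a s⁻¹) :=
        setLIntegral_mono' measurableSet_Ioc fun s hs => iSup_le fun i => ENNReal.ofReal_le_ofReal
          (mul_exp_neg_mul_div_le_inv_div hpos hmono hmono' (hlam i) hs.1)
    _ = ∫⁻ u in Ici (1:ℝ), ENNReal.ofReal (u ^ 2)⁻¹ * ENNReal.ofReal (u / a u) :=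
        lintegral_Ioc_zero_one_comp_inv fun u => ENNReal.ofReal (u / a u)
    _ = ∫⁻ u in Ici (1:ℝ), ENNReal.ofReal (1 / (u * a u)) := by
        refine setLIntegral_congr_fun measurableSet_Ici fun u hu => ?_
        have hu0 : u ≠ 0 := (zero_lt_one.trans_le hu).ne'
        rw [← ENNReal.ofReal_mul (by positivity)]
        congr 1
        field_simp
    _ < ⊤ := hint

theorem stmt_2 (a : ℝ → ℝ) (lam : ℕ → ℝ)
    (hmeas : Measurable a)
    (hpos : ∀ x > 0, 0 < a x)
    (hmono : MonotoneOn a (Ioi 0))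
    (hmono' : MonotoneOn (fun x => x / a x) (Ioi 0))
    (hint : ∫⁻ s in Ici (1:ℝ), ENNReal.ofReal (1 / (s * a s)) < ⊤)
    (hlam0 : 0 < lam 0) (hlammono : Monotone lam) :
    ∫⁻ s in Ioc (0:ℝ) 1,
      ⨆ i, ENNReal.ofReal (lam i * Real.exp (-(lam i * s)) / a (lam i)) < ⊤ :=
  stmt_2_general a lam hpos hmono hmono' hint hlam0 hlammono
end

section
/- Let a : (0,∞) → (0,∞) and (λᵢ)_{i≥1} with 0 < λ₁ ≤ λ₂ ≤ ⋯ and λᵢ → ∞. If ∫₀¹ sup_{i≥1} λᵢ e^{-λᵢ s}/a(λᵢ) ds < ∞, then lim_{i→∞} a(λᵢ) = ∞. -/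
open Set Real MeasureTheory Filter
open scoped ENNReal

/-!
If `a (λᵢ) < b` for infinitely many `i`, pick among these `λᵢ` a sequence `1 ≤ μ₀`,
`2 μₙ ≤ μₙ₊₁`. On `(μₙ₊₁⁻¹, μₙ⁻¹]` the supremum is at least `μₙ e⁻¹ / b`, and the interval
has length at least `μₙ⁻¹ / 2`, so each of these disjoint subintervals of `(0, 1]`
contributes at least `e⁻¹ / (2b)` to the integral, which therefore diverges.
-/

lemma ofReal_exp_neg_one_div_le_setLIntegral_Ioc {μ ν b : ℝ} (hμ : 0 < μ) (hb : 0 < b)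
    (hμν : 2 * μ ≤ ν) :
    ENNReal.ofReal (exp (-1) / (2 * b)) ≤
      ∫⁻ s in Ioc ν⁻¹ μ⁻¹, ENNReal.ofReal (μ * exp (-(μ * s)) / b) := by
  have hν : 0 < ν := by linarith
  have hlength : 1 / 2 ≤ μ * (μ⁻¹ - ν⁻¹) := by
    have : μ * ν⁻¹ ≤ 1 / 2 := by
      rw [← div_eq_mul_inv, div_le_iff₀ hν]
      linarith
    rw [mul_sub, mul_inv_cancel₀ hμ.ne']
    linarith
  have hlower : ∀ s ∈ Ioc ν⁻¹ μ⁻¹,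
      ENNReal.ofReal (μ * exp (-1) / b) ≤ ENNReal.ofReal (μ * exp (-(μ * s)) / b) := by
    rintro s ⟨-, hs⟩
    have : μ * s ≤ 1 := by simpa [hμ.ne'] using mul_le_mul_of_nonneg_left hs hμ.le
    gcongr
  calc ENNReal.ofReal (exp (-1) / (2 * b))
      ≤ ENNReal.ofReal (μ * exp (-1) / b * (μ⁻¹ - ν⁻¹)) := by
        apply ENNReal.ofReal_le_ofReal
        calc exp (-1) / (2 * b) = exp (-1) / b * (1 / 2) := by ring
          _ ≤ exp (-1) / b * (μ * (μ⁻¹ - ν⁻¹)) := by gcongr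
          _ = μ * exp (-1) / b * (μ⁻¹ - ν⁻¹) := by ring
    _ = ∫⁻ s in Ioc ν⁻¹ μ⁻¹, ENNReal.ofReal (μ * exp (-1) / b) := by
        rw [setLIntegral_const, Real.volume_Ioc, ENNReal.ofReal_mul (by positivity)]
    _ ≤ _ := setLIntegral_mono' measurableSet_Ioc hlower

lemma setLIntegral_Ioc_zero_one_eq_top {g : ℝ → ℝ≥0∞} {μ : ℕ → ℝ} {b : ℝ} (hb : 0 < b)
    (hμ1 : ∀ n, 1 ≤ μ n) (hμ : ∀ n, 2 * μ n ≤ μ (n + 1))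
    (hg : ∀ n s, ENNReal.ofReal (μ n * exp (-(μ n * s)) / b) ≤ g s) :
    ∫⁻ s in Ioc 0 1, g s = ∞ := by
  have hμpos : ∀ n, 0 < μ n := fun n => one_pos.trans_le (hμ1 n)
  have hanti : Antitone fun n => (μ n)⁻¹ :=
    antitone_nat_of_succ_le fun n => inv_anti₀ (hμpos n) (by linarith [hμ n, hμpos n])
  have hsub : (⋃ n, Ioc (μ (n + 1))⁻¹ (μ n)⁻¹) ⊆ Ioc 0 1 :=
    iUnion_subset fun n => Ioc_subset_Ioc (inv_pos.2 (hμpos _)).le (inv_le_one_of_one_le₀ (hμ1 n))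
  refine top_le_iff.1 ?_
  calc ∞ = ∑' _ : ℕ, ENNReal.ofReal (exp (-1) / (2 * b)) :=
        (ENNReal.tsum_const_eq_top_of_ne_zero (ENNReal.ofReal_pos.2 (by positivity)).ne').symm
    _ ≤ ∑' n, ∫⁻ s in Ioc (μ (n + 1))⁻¹ (μ n)⁻¹, g s := ENNReal.tsum_le_tsum fun n =>
        (ofReal_exp_neg_one_div_le_setLIntegral_Ioc (hμpos n) hb (hμ n)).trans
          (lintegral_mono fun s => hg n s)
    _ = ∫⁻ s in ⋃ n, Ioc (μ (n + 1))⁻¹ (μ n)⁻¹, g s :=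
        (lintegral_iUnion (fun _ => measurableSet_Ioc) hanti.pairwise_disjoint_on_Ioc_succ g).symm
    _ ≤ ∫⁻ s in Ioc 0 1, g s := lintegral_mono_set hsub

lemma exists_seq_mem_one_le_two_mul_le_succ {T : Set ℝ} (hT : ¬BddAbove T) :
    ∃ μ : ℕ → ℝ, ∀ n, (μ n ∈ T ∧ 1 ≤ μ n) ∧ 2 * μ n ≤ μ (n + 1) := by
  obtain ⟨μ, hμT, hμ⟩ := exists_seq_of_forall_finset_exists (fun x => x ∈ T ∧ 1 ≤ x)
    (fun x y => 2 * x ≤ y) fun s _ => by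
      obtain ⟨M, hM⟩ := s.bddAbove
      obtain ⟨y, hyT, hy⟩ := not_bddAbove_iff.1 hT (max 1 (2 * M))
      exact ⟨y, ⟨hyT, (le_max_left _ _).trans hy.le⟩, fun x hx =>
        (mul_le_mul_of_nonneg_left (hM hx) two_pos.le).trans ((le_max_right _ _).trans hy.le)⟩
  exact ⟨μ, fun n => ⟨hμT n, hμ n (n + 1) n.lt_succ_self⟩⟩

theorem stmt_6_general (a : ℝ → ℝ) (lam : ℕ → ℝ)
    (hpos : ∀ x > 0, 0 < a x)
    (hlamtop : Tendsto lam atTop atTop)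
    (hint : ∫⁻ s in Ioc (0:ℝ) 1,
      ⨆ i, ENNReal.ofReal (lam i * Real.exp (-(lam i * s)) / a (lam i)) < ⊤) :
    Tendsto (fun i => a (lam i)) atTop atTop := by
  by_contra hdiv
  obtain ⟨b, hfreq⟩ : ∃ b, ∃ᶠ i in atTop, a (lam i) < b := by
    simpa only [tendsto_atTop, not_forall, not_eventually, not_le] using hdiv
  have hT : ¬BddAbove (lam '' {i | a (lam i) < b}) := not_bddAbove_iff.2 fun c =>
    let ⟨i, hi, hci⟩ := (hfreq.and_eventually (hlamtop.eventually_gt_atTop c)).exists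
    ⟨lam i, mem_image_of_mem _ hi, hci⟩
  obtain ⟨μ, hμ⟩ := exists_seq_mem_one_le_two_mul_le_succ hT
  have hlam : ∀ n, ∃ i, lam i = μ n ∧ 0 < a (lam i) ∧ a (lam i) < b := fun n => by
    obtain ⟨⟨⟨i, hi, hiμ⟩, hμ1⟩, -⟩ := hμ n
    exact ⟨i, hiμ, hpos _ (by linarith), hi⟩
  have hb : 0 < b := let ⟨_, _, ha, hab⟩ := hlam 0; ha.trans hab
  refine hint.ne (setLIntegral_Ioc_zero_one_eq_top hb (fun n => (hμ n).1.2) (fun n => (hμ n).2)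
    fun n s => ?_)
  obtain ⟨i, hiμ, ha, hab⟩ := hlam n
  refine le_iSup_of_le i (ENNReal.ofReal_le_ofReal ?_)
  rw [hiμ] at ha hab ⊢
  exact div_le_div_of_nonneg_left (mul_pos (one_pos.trans_le (hμ n).1.2) (exp_pos _)).le ha hab.le

theorem stmt_6 (a : ℝ → ℝ) (lam : ℕ → ℝ)
    (hpos : ∀ x > 0, 0 < a x)
    (hlam0 : 0 < lam 0) (hlammono : Monotone lam)
    (hlamtop : Tendsto lam atTop atTop)
    (hint : ∫⁻ s in Ioc (0:ℝ) 1,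
      ⨆ i, ENNReal.ofReal (lam i * Real.exp (-(lam i * s)) / a (lam i)) < ⊤) :
    Tendsto (fun i => a (lam i)) atTop atTop :=
  stmt_6_general a lam hpos hlamtop hint
end
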